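/- Let V ∈ ℝ^{N×M} with V^T V = I_M, H ∈ ℝ^{M×M}, and A = V H V^T. For k ≥ 1 and any scalar c, applying the entire function φ_k (with φ_k(z) = Σ_{i≥0} z^i/(k+i)!) to the matrix cA gives φ_k(cA) = (1/k!)(I_N − V V^T) + V φ_k(cH) V^T. -/

import Mathlib

/-!
Since `Vᵀ * V = 1`, every positive power of `V * X * Vᵀ` equals `V * X ^ i * Vᵀ`, so the series
for `φ_k(V X Vᵀ)` agrees termwise with `V φ_k(X) Vᵀ` except at `i = 0`, where it has `1 / k!`
in place of `V Vᵀ / k!`.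
-/

open Matrix

noncomputable def phiMat {n : ℕ} (k : ℕ) (X : Matrix (Fin n) (Fin n) ℝ) :
    Matrix (Fin n) (Fin n) ℝ :=
  ∑' i : ℕ, ((Nat.factorial (k + i) : ℝ))⁻¹ • X ^ i

open Nat in
theorem summable_inv_factorial_add_smul_pow {𝔸 : Type*} [NormedRing 𝔸] [NormedAlgebra ℝ 𝔸]
    [CompleteSpace 𝔸] (k : ℕ) (x : 𝔸) :
    Summable fun i => ((k + i)! : ℝ)⁻¹ • x ^ i := by
  refine .of_norm_bounded (NormedSpace.norm_expSeries_summable' (𝕂 := ℝ) x) fun i => ?_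
  rw [norm_smul, norm_smul, norm_inv, norm_inv, RCLike.norm_natCast, RCLike.norm_natCast]
  gcongr
  exact le_add_left i k

theorem hasSum_phiMat {n : ℕ} (k : ℕ) (X : Matrix (Fin n) (Fin n) ℝ) :
    HasSum (fun i => ((Nat.factorial (k + i) : ℝ))⁻¹ • X ^ i) (phiMat k X) :=
  -- any of the matrix operator norms induces the product topology, in which `phiMat` is summed
  let _ := Matrix.linftyOpNormedRing (n := Fin n) (α := ℝ)
  let _ := Matrix.linftyOpNormedAlgebra (n := Fin n) (R := ℝ) (α := ℝ)
  (summable_inv_factorial_add_smul_pow k X).hasSum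

theorem Matrix.mul_mul_pow_succ_of_mul_eq_one {m n R : Type*} [Fintype m] [Fintype n]
    [DecidableEq m] [DecidableEq n] [Semiring R] {V : Matrix n m R} {W : Matrix m n R}
    (hWV : W * V = 1)
    (X : Matrix m m R) (i : ℕ) :
    (V * X * W) ^ (i + 1) = V * X ^ (i + 1) * W := by
  induction i with
  | zero => simp
  | succ i ih =>
    rw [pow_succ, ih, pow_succ X (i + 1)]
    simp only [Matrix.mul_assoc, ← Matrix.mul_assoc W V, hWV, Matrix.one_mul]

theorem phiMat_mul_mul {n m : ℕ} (k : ℕ) {V : Matrix (Fin n) (Fin m) ℝ}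
    {W : Matrix (Fin m) (Fin n) ℝ} (hWV : W * V = 1) (X : Matrix (Fin m) (Fin m) ℝ) :
    phiMat k (V * X * W) = ((Nat.factorial k : ℝ))⁻¹ • (1 - V * W) + V * phiMat k X * W := by
  have hterm : ∀ i, ((Nat.factorial (k + i) : ℝ))⁻¹ • (V * X * W) ^ i =
      (if i = 0 then ((Nat.factorial k : ℝ))⁻¹ • (1 - V * W) else 0) +
        V * (((Nat.factorial (k + i) : ℝ))⁻¹ • X ^ i) * W := by
    rintro (_ | i)
    · simp [Matrix.mul_smul, Matrix.smul_mul, smul_sub]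
    · simp [Matrix.mul_mul_pow_succ_of_mul_eq_one hWV, Matrix.mul_smul, Matrix.smul_mul]
  have hconj : Continuous fun Y : Matrix (Fin m) (Fin m) ℝ => V * Y * W := by fun_prop
  refine HasSum.tsum_eq ?_
  simp_rw [hterm]
  exact (hasSum_ite_eq 0 _).add ((hasSum_phiMat k X).map
    ((addMonoidHomMulRight W).comp (addMonoidHomMulLeft V)) hconj)

theorem phi_of_approx_jacobian_general (N M : ℕ)
    (V : Matrix (Fin N) (Fin M) ℝ) (H : Matrix (Fin M) (Fin M) ℝ)
    (hV : Vᵀ * V = 1)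
    (A : Matrix (Fin N) (Fin N) ℝ) (hA : A = V * H * Vᵀ)
    (k : ℕ) (c : ℝ) :
    phiMat k (c • A) =
      ((Nat.factorial k : ℝ))⁻¹ • ((1 : Matrix (Fin N) (Fin N) ℝ) - V * Vᵀ) +
        V * phiMat k (c • H) * Vᵀ := by
  rw [hA, ← Matrix.smul_mul, ← Matrix.mul_smul]
  exact phiMat_mul_mul k hV (c • H)

theorem phi_of_approx_jacobian (N M : ℕ)
    (V : Matrix (Fin N) (Fin M) ℝ) (H : Matrix (Fin M) (Fin M) ℝ)
    (hV : Vᵀ * V = 1)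
    (A : Matrix (Fin N) (Fin N) ℝ) (hA : A = V * H * Vᵀ)
    (k : ℕ) (hk : 1 ≤ k) (c : ℝ) :
    phiMat k (c • A) =
      ((Nat.factorial k : ℝ))⁻¹ • ((1 : Matrix (Fin N) (Fin N) ℝ) - V * Vᵀ) +
        V * phiMat k (c • H) * Vᵀ :=
  phi_of_approx_jacobian_general N M V H hV A hA k c
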